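/- Let {G_n}_{n∈ω} be a closed tower of Hausdorff topological groups satisfying the Group Condition (GC). Then the Bamboo-Shoot topology τ_BS is a Hausdorff group topology on G := ⋃_{n∈ω} G_n; consequently τ_BS coincides with τ_gr, the finest group topology on G making all inclusions G_n → G continuous, i.e., (G, τ_BS) = glim G_n. -/

import Mathlib

open Topology Filter Set Pointwise

/-- The finite product `U k · U (k+1) ⋯ U (k+j)` of a sequence of subsets of a group. -/
def bsProd {G : Type*} [Group G] (U : ℕ → Set G) (k : ℕ) : ℕ → Set G
  | 0 => U k
  | j + 1 => bsProd U k j * U (k + (j + 1))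

/-- `U⁺[k] = ⋃_{n ≥ k} U k · U (k+1) ⋯ U n`. -/
def bsPlus {G : Type*} [Group G] (U : ℕ → Set G) (k : ℕ) : Set G :=
  ⋃ j, bsProd U k j

/-- The Bamboo-Shoot set `U[k] = (U⁺[k])⁻¹ · U⁺[k]`. -/
def bsU {G : Type*} [Group G] (U : ℕ → Set G) (k : ℕ) : Set G :=
  (bsPlus U k)⁻¹ * bsPlus U k

/-- A tower of topological groups inside an ambient (abstract) group `G`:
an increasing sequence of subgroups covering `G`, each carrying its own group topology,
such that all inclusions `G_n → G_{n+1}` are continuous. -/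
structure GroupTower (G : Type*) [Group G] where
  H : ℕ → Subgroup G
  τ : ∀ n, TopologicalSpace (H n)
  topGroup : ∀ n, @IsTopologicalGroup (H n) (τ n) _
  mono : ∀ n, H n ≤ H (n + 1)
  union : ∀ g : G, ∃ n, g ∈ H n
  incl_cont : ∀ n, Continuous[τ n, τ (n + 1)] (Subgroup.inclusion (mono n))

namespace GroupTower

variable {G : Type*} [Group G]

/-- The tower is closed: each `G_n` carries the subspace topology from `G_{n+1}`
and is closed in `G_{n+1}`. -/
def IsClosedTower (T : GroupTower G) : Prop :=
  ∀ n, T.τ n = (T.τ (n + 1)).induced (Subgroup.inclusion (T.mono n)) ∧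
    IsClosed[T.τ (n + 1)] (Set.range (Subgroup.inclusion (T.mono n)))

/-- `U` (viewed as a subset of the ambient group) is an open symmetric neighborhood of
the identity in `G_n`. -/
def NsMem (T : GroupTower G) (n : ℕ) (U : Set G) : Prop :=
  U ⊆ (T.H n : Set G) ∧ IsOpen[T.τ n] (((↑) : T.H n → G) ⁻¹' U) ∧ (1 : G) ∈ U ∧ U⁻¹ = U

/-- The Group Condition (GC). -/
def GC (T : GroupTower G) : Prop :=
  ∀ U : ℕ → Set G, (∀ n, T.NsMem n (U n)) → ∀ k : ℕ,
    ∃ V : ℕ → Set G, (∀ n, T.NsMem n (V n)) ∧ bsU V k ⊆ bsPlus U k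

/-- `τBS` is the Bamboo-Shoot topology of the tower: at every point `g` the sets
`g • U[k]` form a neighborhood base. -/
def IsBambooShoot (T : GroupTower G) (τBS : TopologicalSpace G) : Prop :=
  ∀ g : G, (@nhds G τBS g).HasBasis
    (fun p : (ℕ → Set G) × ℕ => ∀ n, T.NsMem n (p.1 n))
    (fun p => g • bsU p.1 p.2)

/-- `τind` is the inductive limit topology of the tower in the category of topological
spaces: a set is open iff its trace on every `G_n` is open. -/
def IsIndTop (T : GroupTower G) (τind : TopologicalSpace G) : Prop :=
  ∀ A : Set G, IsOpen[τind] A ↔ ∀ n, IsOpen[T.τ n] (((↑) : T.H n → G) ⁻¹' A)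

/-- `t` is a group topology on `G` making all the inclusions `G_n → G` continuous. -/
def IsCompatGroupTopology (T : GroupTower G) (t : TopologicalSpace G) : Prop :=
  @IsTopologicalGroup G t _ ∧ ∀ n, Continuous[T.τ n, t] ((↑) : T.H n → G)

/-- `t` coincides with `τ_gr`, i.e. `(G, t) = glim G_n` : `t` is a group topology making
all inclusions continuous, and it is the finest such topology (every open set of any
such topology is `t`-open). -/
def IsGLim (T : GroupTower G) (t : TopologicalSpace G) : Prop :=
  T.IsCompatGroupTopology t ∧
    ∀ t' : TopologicalSpace G, T.IsCompatGroupTopology t' →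
      ∀ A : Set G, IsOpen[t'] A → IsOpen[t] A

end GroupTower

/-- A topological space is Ascoli if every compact subset of `C_k(X, ℝ)` is
equicontinuous. -/
def IsAscoliSpace (X : Type*) [TopologicalSpace X] : Prop :=
  ∀ K : Set C(X, ℝ), IsCompact K → Equicontinuous fun f : K => (f.1 : X → ℝ)

/-- A family of sets is a k-network. -/
def IsKNetwork {X : Type*} [TopologicalSpace X] (N : Set (Set X)) : Prop :=
  ∀ K U : Set X, IsCompact K → IsOpen U → K ⊆ U →
    ∃ F : Set (Set X), F ⊆ N ∧ F.Finite ∧ K ⊆ ⋃₀ F ∧ ⋃₀ F ⊆ U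

/-- A family of sets is locally finite. -/
def IsLocallyFiniteFamily {X : Type*} [TopologicalSpace X] (N : Set (Set X)) : Prop :=
  ∀ x : X, ∃ V ∈ 𝓝 x, {s ∈ N | (s ∩ V).Nonempty}.Finite

/-- An ℵ-space: a regular space with a σ-locally finite k-network. -/
def IsAlephSpace (X : Type*) [TopologicalSpace X] : Prop :=
  RegularSpace X ∧ ∃ N : ℕ → Set (Set X),
    (∀ n, IsLocallyFiniteFamily (N n)) ∧ IsKNetwork (⋃ n, N n)

/-- An ℵ₀-space: a regular space with a countable k-network. -/
def IsAleph0Space (X : Type*) [TopologicalSpace X] : Prop :=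
  RegularSpace X ∧ ∃ N : Set (Set X), N.Countable ∧ IsKNetwork N

/-- A k_ω-space. -/
def IsKOmegaSpace (X : Type*) [TopologicalSpace X] : Prop :=
  ∃ K : ℕ → Set X, (∀ n, IsCompact (K n)) ∧ (∀ n, K n ⊆ K (n + 1)) ∧
    (⋃ n, K n) = Set.univ ∧
    ∀ A : Set X, IsClosed A ↔ ∀ n, IsClosed (((↑) : K n → X) ⁻¹' A)

/-- An MK_ω-space: a k_ω-space witnessed by metrizable compact sets. -/
def IsMKOmegaSpace (X : Type*) [TopologicalSpace X] : Prop :=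
  ∃ K : ℕ → Set X, (∀ n, IsCompact (K n)) ∧
    (∀ n, TopologicalSpace.MetrizableSpace (K n)) ∧ (∀ n, K n ⊆ K (n + 1)) ∧
    (⋃ n, K n) = Set.univ ∧
    ∀ A : Set X, IsClosed A ↔ ∀ n, IsClosed (((↑) : K n → X) ⁻¹' A)


section SetLemmas
variable {G : Type*} [Group G] {U V : ℕ → Set G} {k l : ℕ}

lemma one_mem_bsProd (h1 : ∀ n, (1:G) ∈ U n) (k j : ℕ) : (1:G) ∈ bsProd U k j := by
  induction j with
  | zero => exact h1 k
  | succ j ih => exact ⟨1, ih, 1, h1 _, mul_one 1⟩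

lemma bsProd_subset_bsPlus (k j : ℕ) : bsProd U k j ⊆ bsPlus U k :=
  subset_iUnion (fun j => bsProd U k j) j

lemma one_mem_bsPlus (h1 : ∀ n, (1:G) ∈ U n) (k : ℕ) : (1:G) ∈ bsPlus U k :=
  bsProd_subset_bsPlus k 0 (h1 k)

lemma bsProd_subset_succ (h1 : ∀ n, (1:G) ∈ U n) (k j : ℕ) :
    bsProd U k j ⊆ bsProd U k (j+1) := fun a ha => ⟨a, ha, 1, h1 _, mul_one a⟩

lemma bsProd_mono_j (h1 : ∀ n, (1:G) ∈ U n) (k : ℕ) {j j' : ℕ} (h : j ≤ j') :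
    bsProd U k j ⊆ bsProd U k j' := by
  induction h with
  | refl => exact subset_rfl
  | step h ih => exact ih.trans (bsProd_subset_succ h1 k _)

-- U (k+j) ⊆ bsProd U k j
lemma subset_bsProd (h1 : ∀ n, (1:G) ∈ U n) (k j : ℕ) : U (k+j) ⊆ bsProd U k j := by
  induction j with
  | zero => exact subset_rfl
  | succ j ih => exact fun a ha => ⟨1, one_mem_bsProd h1 k j, a, ha, one_mul a⟩

lemma mem_bsPlus_of_le (h1 : ∀ n, (1:G) ∈ U n) {k l : ℕ} (h : k ≤ l) : U l ⊆ bsPlus U k := by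
  obtain ⟨j, rfl⟩ := Nat.exists_eq_add_of_le h
  exact (subset_bsProd h1 k j).trans (bsProd_subset_bsPlus k j)

lemma bsProd_succ_left (h1 : ∀ n, (1:G) ∈ U n) (k j : ℕ) :
    bsProd U (k+1) j ⊆ bsProd U k (j+1) := by
  induction j with
  | zero => exact fun a ha => ⟨1, h1 k, a, ha, one_mul a⟩
  | succ j ih =>
      have e : k + 1 + (j+1) = k + (j+1+1) := by omega
      intro a ha
      obtain ⟨b, hb, c, hc, rfl⟩ := ha
      exact ⟨b, ih hb, c, by rwa [← e], rfl⟩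

lemma bsPlus_mono_k (h1 : ∀ n, (1:G) ∈ U n) {k l : ℕ} (h : k ≤ l) :
    bsPlus U l ⊆ bsPlus U k := by
  induction h with
  | refl => exact subset_rfl
  | step h ih =>
      refine Set.Subset.trans ?_ ih
      exact iUnion_subset fun j => (bsProd_succ_left h1 _ j).trans (bsProd_subset_bsPlus _ _)

lemma bsU_inv (U : ℕ → Set G) (k : ℕ) : (bsU U k)⁻¹ = bsU U k := by
  unfold bsU; rw [mul_inv_rev, inv_inv]

lemma one_mem_bsU (h1 : ∀ n, (1:G) ∈ U n) (k : ℕ) : (1:G) ∈ bsU U k :=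
  ⟨1, by simpa using one_mem_bsPlus h1 k, 1, one_mem_bsPlus h1 k, mul_one 1⟩

lemma bsPlus_subset_bsU (h1 : ∀ n, (1:G) ∈ U n) (k : ℕ) : bsPlus U k ⊆ bsU U k :=
  fun a ha => ⟨1, by simpa using one_mem_bsPlus h1 k, a, ha, one_mul a⟩

lemma bsU_mul_bsU (hVU : bsU V k ⊆ bsPlus U k) :
    bsU V k * bsU V k ⊆ bsU U k := by
  rintro x ⟨a, ha, b, hb, rfl⟩
  have ha' : a⁻¹ ∈ bsU V k := by rw [← bsU_inv V k]; exact Set.inv_mem_inv.2 ha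
  exact ⟨a, Set.mem_inv.2 (hVU ha'), b, hVU hb, rfl⟩

-- conjugation
lemma conj_bsProd (x : G) (hconj : ∀ n, l ≤ n → (fun a => x * a * x⁻¹) '' V n ⊆ U n)
    (j : ℕ) : (fun a => x * a * x⁻¹) '' bsProd V l j ⊆ bsProd U l j := by
  induction j with
  | zero => exact hconj l le_rfl
  | succ j ih =>
      rintro - ⟨a, ⟨b, hb, c, hc, rfl⟩, rfl⟩
      refine ⟨x*b*x⁻¹, ih ⟨b, hb, rfl⟩, x*c*x⁻¹, hconj _ (by omega) ⟨c, hc, rfl⟩, by group⟩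

lemma conj_bsU (x : G) (h1 : ∀ n, (1:G) ∈ U n) (hkl : k ≤ l)
    (hconj : ∀ n, l ≤ n → (fun a => x * a * x⁻¹) '' V n ⊆ U n) :
    (fun a => x * a * x⁻¹) '' bsU V l ⊆ bsU U k := by
  have hplus : (fun a => x * a * x⁻¹) '' bsPlus V l ⊆ bsPlus U k := by
    rintro - ⟨a, ha, rfl⟩
    obtain ⟨s, ⟨j, rfl⟩, ha⟩ := ha
    exact bsPlus_mono_k h1 hkl (bsProd_subset_bsPlus l j (conj_bsProd x hconj j ⟨a, ha, rfl⟩))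
  rintro - ⟨a, ⟨p, hp, q, hq, rfl⟩, rfl⟩
  refine ⟨x * p * x⁻¹, ?_, x * q * x⁻¹, hplus ⟨q, hq, rfl⟩, by group⟩
  have h2 : (x * p * x⁻¹)⁻¹ = x * p⁻¹ * x⁻¹ := by group
  rw [Set.mem_inv, h2]
  exact hplus ⟨p⁻¹, Set.mem_inv.1 hp, rfl⟩

end SetLemmas

namespace GroupTower
variable {G : Type*} [Group G] (T : GroupTower G)

lemma le_of_le {n l : ℕ} (h : n ≤ l) : T.H n ≤ T.H l := by
  induction h with
  | refl => exact le_rfl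
  | step _ ih => exact ih.trans (T.mono _)

lemma cont_trans {n l : ℕ} (h : n ≤ l) :
    Continuous[T.τ n, T.τ l] (Subgroup.inclusion (T.le_of_le h)) := by
  induction h with
  | refl =>
      exact @Continuous.congr _ _ (T.τ n) (T.τ n) _ _ (@continuous_id _ (T.τ n)) fun x => rfl
  | @step l h ih =>
      exact @Continuous.congr _ _ (T.τ n) (T.τ (l+1)) _ _
        (@Continuous.comp _ _ _ (T.τ n) (T.τ l) (T.τ (l+1)) _ _ (T.incl_cont l) ih)
        fun x => rfl

lemma preimage_open_of_le {S : Set G} {n l : ℕ} (h : n ≤ l)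
    (hS : IsOpen[T.τ l] (((↑) : T.H l → G) ⁻¹' S)) :
    IsOpen[T.τ n] (((↑) : T.H n → G) ⁻¹' S) := by
  letI := T.τ n; letI := T.τ l
  have heq : (((↑) : T.H n → G) ⁻¹' S) =
      (Subgroup.inclusion (T.le_of_le h)) ⁻¹' (((↑) : T.H l → G) ⁻¹' S) := rfl
  rw [heq]
  exact hS.preimage (T.cont_trans h)

lemma smul_preimage_open {S : Set G} {l : ℕ} {g : G} (hg : g ∈ T.H l)
    (hS : IsOpen[T.τ l] (((↑) : T.H l → G) ⁻¹' S)) :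
    IsOpen[T.τ l] (((↑) : T.H l → G) ⁻¹' (g • S)) := by
  letI := T.τ l
  haveI := T.topGroup l
  have : (((↑) : T.H l → G) ⁻¹' (g • S)) =
      (fun y : T.H l => (⟨g, hg⟩ : T.H l)⁻¹ * y) ⁻¹' (((↑) : T.H l → G) ⁻¹' S) := by
    ext y
    simp only [Set.mem_preimage, Set.mem_smul_set_iff_inv_smul_mem, smul_eq_mul]
    rfl
  rw [this]
  exact (continuous_const.mul continuous_id).isOpen_preimage _ hS

lemma nsMem_coe (n : ℕ) : T.NsMem n ((T.H n : Set G)) := by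
  refine ⟨subset_rfl, ?_, (T.H n).one_mem, ?_⟩
  · have : (((↑) : T.H n → G) ⁻¹' (T.H n : Set G)) = Set.univ := by
      ext y; simpa using y.2
    rw [this]; exact @isOpen_univ _ (T.τ n)
  · ext x; simp [Set.mem_inv, inv_mem_iff]

lemma nsMem.one_mem {n : ℕ} {U : Set G} (h : T.NsMem n U) : (1:G) ∈ U := h.2.2.1

end GroupTower

lemma sep_step_abstract {H : Type*} [Group H] [TopologicalSpace H] [IsTopologicalGroup H]
    {c : Set H} (hc : IsClosed c) {x : H} (hx : x ∉ c) :
    ∃ W : Set H, IsOpen W ∧ (1:H) ∈ W ∧ W⁻¹ = W ∧ x ∉ closure (W * c * W) := by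
  have hf : Continuous fun p : H × H × H => p.1⁻¹ * x * p.2.2⁻¹ * p.2.1⁻¹ := by fun_prop
  have hxc : (fun p : H × H × H => p.1⁻¹ * x * p.2.2⁻¹ * p.2.1⁻¹) ⁻¹' cᶜ ∈
      𝓝 ((1 : H), (1 : H), (1 : H)) := by
    apply hf.continuousAt.preimage_mem_nhds
    simp only [inv_one, one_mul, mul_one]
    exact hc.isOpen_compl.mem_nhds hx
  rw [nhds_prod_eq, nhds_prod_eq] at hxc
  obtain ⟨s, hs, t, ht, hst⟩ := Filter.mem_prod_iff.1 hxc
  obtain ⟨t1, ht1, t2, ht2, ht12⟩ := Filter.mem_prod_iff.1 ht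
  set W0 : Set H := interior (s ∩ t1 ∩ t2) with hW0
  have hW0o : IsOpen W0 := isOpen_interior
  have hW01 : (1:H) ∈ W0 :=
    mem_interior_iff_mem_nhds.2 (inter_mem (inter_mem hs ht1) ht2)
  set W := W0 ∩ W0⁻¹ with hWdef
  have hWo : IsOpen W := hW0o.inter hW0o.inv
  have hW1 : (1:H) ∈ W := ⟨hW01, by simpa using hW01⟩
  have hWsymm : W⁻¹ = W := by rw [hWdef, Set.inter_inv, inv_inv, Set.inter_comm]
  refine ⟨W, hWo, hW1, hWsymm, ?_⟩
  have hWs : W ⊆ s ∩ t1 ∩ t2 := fun a ha => interior_subset ha.1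
  have key : ∀ w1 ∈ W, ∀ w2 ∈ W, ∀ w3 ∈ W, w1⁻¹ * x * w3⁻¹ * w2⁻¹ ∉ c := by
    intro w1 h1 w2 h2 w3 h3
    exact hst (Set.mk_mem_prod (hWs h1).1.1 (ht12 (Set.mk_mem_prod (hWs h2).1.2 (hWs h3).2)))
  intro hcl
  have hmem : x • W ∈ 𝓝 x := (hWo.smul x).mem_nhds ⟨1, hW1, mul_one x⟩
  obtain ⟨z, hz1, hz2⟩ := mem_closure_iff_nhds.1 hcl _ hmem
  obtain ⟨w3, hw3, hzeq⟩ := hz1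
  obtain ⟨-, ⟨w1, hw1, y, hy, rfl⟩, w2, hw2, hz⟩ := hz2
  -- x • w3 = z = w1 * y * w2
  have e : x * w3 = w1 * y * w2 := by rw [← hzeq] at hz; exact hz.symm
  have hw3' : w3⁻¹ ∈ W := by rw [← hWsymm]; exact Set.inv_mem_inv.2 hw3
  have : w1⁻¹ * x * (w3⁻¹)⁻¹ * w2⁻¹ = y := by
    rw [inv_inv]
    have : x * w3 * w2⁻¹ = w1 * y := by rw [e]; group
    calc w1⁻¹ * x * w3 * w2⁻¹ = w1⁻¹ * (x * w3 * w2⁻¹) := by group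
    _ = w1⁻¹ * (w1 * y) := by rw [this]
    _ = y := by group
  exact key w1 hw1 w2 hw2 w3⁻¹ hw3' (this ▸ hy)


section Sep
variable {G : Type*} [Group G] (T : GroupTower G)

lemma closed_transfer (hclosed : T.IsClosedTower) {n : ℕ} {C : Set G}
    (hC : C ⊆ (T.H n : Set G)) (h : IsClosed[T.τ n] (((↑) : T.H n → G) ⁻¹' C)) :
    IsClosed[T.τ (n+1)] (((↑) : T.H (n+1) → G) ⁻¹' C) := by
  letI := T.τ n
  letI := T.τ (n+1)
  obtain ⟨hind, hcr⟩ := hclosed n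
  have hemb : @IsClosedEmbedding _ _ (T.τ n) (T.τ (n+1)) (Subgroup.inclusion (T.mono n)) :=
    ⟨⟨⟨hind⟩, Subgroup.inclusion_injective _⟩, hcr⟩
  have himg : (((↑) : T.H (n+1) → G) ⁻¹' C) =
      (Subgroup.inclusion (T.mono n)) '' (((↑) : T.H n → G) ⁻¹' C) := by
    ext y
    constructor
    · intro hy
      exact ⟨⟨(y : G), hC hy⟩, hy, by apply Subtype.ext; rfl⟩
    · rintro ⟨z, hz, rfl⟩
      exact hz
  rw [himg]
  exact hemb.isClosedMap _ h

lemma sep_step {n : ℕ} {C : Set G} {x : G} (hx : x ∈ T.H n) (hC : C ⊆ (T.H n : Set G))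
    (hCc : IsClosed[T.τ n] (((↑) : T.H n → G) ⁻¹' C)) (hxC : x ∉ C) :
    ∃ U C' : Set G, T.NsMem n U ∧ C' ⊆ (T.H n : Set G) ∧
      IsClosed[T.τ n] (((↑) : T.H n → G) ⁻¹' C') ∧ x ∉ C' ∧ U⁻¹ * C * U ⊆ C' := by
  letI := T.τ n
  haveI := T.topGroup n
  set c : Set (T.H n) := ((↑) : T.H n → G) ⁻¹' C with hc
  have hxc : (⟨x, hx⟩ : T.H n) ∉ c := hxC
  obtain ⟨W, hWo, hW1, hWsymm, hWcl⟩ := sep_step_abstract hCc hxc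
  have hinj : Function.Injective ((↑) : T.H n → G) := Subtype.coe_injective
  refine ⟨((↑) : T.H n → G) '' W, ((↑) : T.H n → G) '' closure (W * c * W),
    ⟨?_, ?_, ?_, ?_⟩, ?_, ?_, ?_, ?_⟩
  · rintro - ⟨w, hw, rfl⟩; exact w.2
  · rw [Set.preimage_image_eq _ hinj]; exact hWo
  · exact ⟨1, hW1, rfl⟩
  · ext a
    simp only [Set.mem_inv, Set.mem_image]
    constructor
    · rintro ⟨w, hw, hweq⟩
      refine ⟨w⁻¹, by rw [← hWsymm]; exact Set.inv_mem_inv.2 hw, ?_⟩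
      have : (w : G) = a⁻¹ := hweq
      simp [this]
    · rintro ⟨w, hw, rfl⟩
      exact ⟨w⁻¹, by rw [← hWsymm]; exact Set.inv_mem_inv.2 hw, by simp⟩
  · rintro - ⟨w, hw, rfl⟩; exact w.2
  · rw [Set.preimage_image_eq _ hinj]; exact isClosed_closure
  · intro hmem
    obtain ⟨z, hz, hzeq⟩ := hmem
    have : z = (⟨x, hx⟩ : T.H n) := Subtype.ext hzeq
    rw [this] at hz
    exact hWcl hz
  · rintro - ⟨-, ⟨a, ha, z, hz, rfl⟩, u2, hu2, rfl⟩
    rw [Set.mem_inv] at ha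
    obtain ⟨w1, hw1, hw1e⟩ := ha
    obtain ⟨w2, hw2, rfl⟩ := hu2
    have haeq : a = (↑(w1⁻¹) : G) := by
      have : (w1 : G) = a⁻¹ := hw1e
      simp [this]
    have hw1' : w1⁻¹ ∈ W := by rw [← hWsymm]; exact Set.inv_mem_inv.2 hw1
    refine ⟨w1⁻¹ * ⟨z, hC hz⟩ * w2, subset_closure ⟨w1⁻¹ * ⟨z, hC hz⟩, ⟨w1⁻¹, hw1', ⟨z, hC hz⟩, hz, rfl⟩, w2, hw2, rfl⟩, ?_⟩
    rw [haeq]; rfl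
end Sep

section SepMain
variable {G : Type*} [Group G] (T : GroupTower G)

lemma subset_coe_mul {S : Subgroup G} {A B : Set G} (hA : A ⊆ S) (hB : B ⊆ S) :
    A * B ⊆ (S : Set G) := by
  rintro - ⟨a, ha, b, hb, rfl⟩
  exact mul_mem (hA ha) (hB hb)

lemma subset_coe_inv {S : Subgroup G} {A : Set G} (hA : A ⊆ S) : A⁻¹ ⊆ (S : Set G) := by
  intro a ha
  rw [Set.mem_inv] at ha
  simpa using inv_mem (hA ha)

lemma sep_main (hclosed : T.IsClosedTower) (hT2 : ∀ n, @T2Space (T.H n) (T.τ n))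
    {x : G} (hx1 : x ≠ 1) :
    ∃ (U : ℕ → Set G) (k : ℕ), (∀ n, T.NsMem n (U n)) ∧ x ∉ bsU U k := by
  obtain ⟨m, hxm⟩ := T.union x
  set Inv : ∀ _ : ℕ, Set G × Set G × Set G → Prop :=
    fun j s => T.NsMem (m+j) s.1 ∧ s.2.1 ⊆ (T.H (m+j) : Set G) ∧
      (s.2.1)⁻¹ * s.2.1 ⊆ s.2.2 ∧ s.2.2 ⊆ (T.H (m+j) : Set G) ∧
      IsClosed[T.τ (m+j)] (((↑) : T.H (m+j) → G) ⁻¹' s.2.2) ∧ x ∉ s.2.2 with hInv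
  -- base
  have hone : ({1} : Set G) ⊆ (T.H m : Set G) := Set.singleton_subset_iff.2 (T.H m).one_mem
  have honec : IsClosed[T.τ m] (((↑) : T.H m → G) ⁻¹' ({1} : Set G)) := by
    letI := T.τ m
    haveI := hT2 m
    have : (((↑) : T.H m → G) ⁻¹' ({1} : Set G)) = {(1 : T.H m)} := by
      ext y
      constructor
      · exact fun h => Subtype.ext h
      · intro h; rw [Set.mem_singleton_iff] at h; rw [h]; rfl
    rw [this]
    exact isClosed_singleton
  obtain ⟨U0, C0, hU0, hC0H, hC0c, hxC0, hsub0⟩ :=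
    sep_step T (n := m) hxm hone honec (by simpa using hx1)
  have hU0sub : U0⁻¹ * U0 ⊆ C0 := by
    intro a ha
    apply hsub0
    obtain ⟨p, hp, q, hq, rfl⟩ := ha
    exact ⟨p * 1, ⟨p, hp, 1, rfl, rfl⟩, q, hq, by group⟩
  let base : {s : Set G × Set G × Set G // Inv 0 s} :=
    ⟨(U0, U0, C0), hU0, hU0.1, hU0sub, hC0H, hC0c, hxC0⟩
  -- step
  have step : ∀ j (s : {s : Set G × Set G × Set G // Inv j s}),
      {s' : Set G × Set G × Set G // Inv (j+1) s' ∧ s'.2.1 = s.1.2.1 * s'.1} := by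
    intro j s
    have hch : ∃ U C' : Set G, T.NsMem (m+j+1) U ∧ C' ⊆ (T.H (m+j+1) : Set G) ∧
        IsClosed[T.τ (m+j+1)] (((↑) : T.H (m+j+1) → G) ⁻¹' C') ∧ x ∉ C' ∧
        U⁻¹ * s.1.2.2 * U ⊆ C' := by
      obtain ⟨hUs, hPH, hPPC, hCH, hCc, hxC⟩ := s.2
      exact sep_step T (n := m+j+1) (T.le_of_le (Nat.le_add_right m (j+1)) hxm)
        (fun a ha => T.mono _ (hCH ha)) (closed_transfer T hclosed hCH hCc) hxC
    refine ⟨(hch.choose, s.1.2.1 * hch.choose, hch.choose_spec.choose), ?_, rfl⟩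
    obtain ⟨hU'ns, hC''H, hC''c, hxC'', hsub⟩ := hch.choose_spec.choose_spec
    obtain ⟨hUs, hPH, hPPC, hCH, hCc, hxC⟩ := s.2
    refine ⟨hU'ns, subset_coe_mul (fun a ha => T.mono _ (hPH ha)) hU'ns.1, ?_,
      hC''H, hC''c, hxC''⟩
    rintro - ⟨a, ha, b, hb, rfl⟩
    rw [Set.mem_inv] at ha
    obtain ⟨p1, hp1, u1, hu1, he⟩ := ha
    obtain ⟨p2, hp2, u2, hu2, rfl⟩ := hb
    have ha' : a = u1⁻¹ * p1⁻¹ := by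
      have h2 := congrArg (fun z => z⁻¹) he
      simp only [mul_inv_rev, inv_inv] at h2
      exact h2.symm
    have hc : p1⁻¹ * p2 ∈ s.1.2.2 :=
      hPPC ⟨p1⁻¹, Set.inv_mem_inv.2 hp1, p2, hp2, rfl⟩
    apply hsub
    refine ⟨u1⁻¹ * (p1⁻¹ * p2), ⟨u1⁻¹, Set.inv_mem_inv.2 hu1, p1⁻¹ * p2, hc, rfl⟩,
      u2, hu2, ?_⟩
    rw [ha']; group
  -- the recursively defined sequence
  let g : ∀ j, {s : Set G × Set G × Set G // Inv j s} :=
    fun j => Nat.rec (motive := fun j => {s : Set G × Set G × Set G // Inv j s})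
      base (fun j prev => ⟨(step j prev).1, (step j prev).2.1⟩) j
  have hglink : ∀ j, (g (j+1)).1.2.1 = (g j).1.2.1 * (g (j+1)).1.1 :=
    fun j => (step j (g j)).2.2
  refine ⟨fun n => if h : m ≤ n then (g (n - m)).1.1 else ((T.H n : Set G)), m, ?_, ?_⟩
  · intro n
    by_cases h : m ≤ n
    · simp only [dif_pos h]
      have := (g (n - m)).2.1
      rwa [Nat.add_sub_cancel' h] at this
    · simp only [dif_neg h]
      exact T.nsMem_coe n
  · -- x ∉ bsU Uf m
    set Uf : ℕ → Set G := fun n => if h : m ≤ n then (g (n - m)).1.1 else ((T.H n : Set G))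
      with hUf
    have h1 : ∀ n, (1:G) ∈ Uf n := by
      intro n
      by_cases h : m ≤ n
      · simp only [hUf, dif_pos h]
        exact ((g (n-m)).2.1).2.2.1
      · simp only [hUf, dif_neg h]
        exact (T.H n).one_mem
    have hUfval : ∀ j, Uf (m + j) = (g j).1.1 := by
      intro j
      have e : m + j - m = j := by omega
      simp only [hUf, dif_pos (Nat.le_add_right m j)]
      rw [e]
    have hprod : ∀ j, bsProd Uf m j = (g j).1.2.1 := by
      intro j
      induction j with
      | zero =>
          show Uf m = (g 0).1.2.1
          have := hUfval 0
          rw [Nat.add_zero] at this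
          rw [this]
          rfl
      | succ j ih =>
          show bsProd Uf m j * Uf (m + (j+1)) = (g (j+1)).1.2.1
          rw [ih, hUfval (j+1), ← hglink j]
    intro hmem
    obtain ⟨a, ha, b, hb, habe⟩ := hmem
    rw [Set.mem_inv] at ha
    obtain ⟨j1, haj⟩ := Set.mem_iUnion.1 ha
    obtain ⟨j2, hbj⟩ := Set.mem_iUnion.1 hb
    have haj' : a⁻¹ ∈ bsProd Uf m (max j1 j2) := bsProd_mono_j h1 m (le_max_left _ _) haj
    have hbj' : b ∈ bsProd Uf m (max j1 j2) := bsProd_mono_j h1 m (le_max_right _ _) hbj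
    have hx' : x ∈ (bsProd Uf m (max j1 j2))⁻¹ * bsProd Uf m (max j1 j2) := by
      rw [← habe]
      exact ⟨a, Set.mem_inv.2 haj', b, hbj', rfl⟩
    rw [hprod] at hx'
    exact ((g (max j1 j2)).2).2.2.2.2.2 (((g (max j1 j2)).2).2.2.1 hx')
end SepMain

section Telescope
variable {G : Type*} [Group G]

lemma bsProd_cons (A : ℕ → Set G) (k j : ℕ) :
    bsProd A k (j+1) = A k * bsProd A (k+1) j := by
  induction j with
  | zero => rfl
  | succ j ih =>
      show bsProd A k (j+1) * A (k + (j+2)) = A k * bsProd A (k+1) (j+1)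
      rw [ih]
      have e : k + (j+2) = k+1+(j+1) := by omega
      show A k * bsProd A (k+1) j * A (k + (j+2)) = A k * (bsProd A (k+1) j * A (k+1 + (j+1)))
      rw [e, mul_assoc]

lemma telescope {A : ℕ → Set G} (h1 : ∀ n, (1:G) ∈ A n)
    (hch : ∀ n, A (n+1) * A (n+1) ⊆ A n) : ∀ j k, bsProd A (k+1) j ⊆ A k := by
  intro j
  induction j with
  | zero => exact fun k a ha => hch k ⟨a, ha, 1, h1 _, mul_one a⟩
  | succ j ih =>
      intro k
      rw [bsProd_cons]
      exact fun a ⟨b, hb, c, hc, he⟩ => hch k ⟨b, hb, c, ih (k+1) hc, he⟩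

lemma bsProd_mono_U {A B : ℕ → Set G} (h : ∀ n, A n ⊆ B n) (k j : ℕ) :
    bsProd A k j ⊆ bsProd B k j := by
  induction j with
  | zero => exact h k
  | succ j ih => exact fun a ⟨b, hb, c, hc, he⟩ => ⟨b, ih hb, c, h _ hc, he⟩

lemma bsProd_shift (A : ℕ → Set G) (j : ℕ) :
    bsProd (fun n => A (n+1)) 0 j = bsProd A 1 j := by
  induction j with
  | zero => rfl
  | succ j ih =>
      show bsProd (fun n => A (n+1)) 0 j * A (0 + (j+1) + 1) = bsProd A 1 j * A (1 + (j+1))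
      have e : 0 + (j+1) + 1 = 1 + (j+1) := by omega
      rw [ih, e]
end Telescope

section Main
variable {G : Type*} [Group G]

lemma smul_subset_iff' {c : G} {s A : Set G} : c • s ⊆ A ↔ s ⊆ (c * ·) ⁻¹' A := by
  constructor
  · intro h z hz; exact h ⟨z, hz, rfl⟩
  · rintro h - ⟨z, hz, rfl⟩; exact h hz

lemma nsMem_one_mem {T : GroupTower G} {U : ℕ → Set G}
    (hU : ∀ n, T.NsMem n (U n)) : ∀ n, (1:G) ∈ U n := fun n => (hU n).2.2.1

-- the group topology
lemma bs_topGroup (T : GroupTower G) (hGC : T.GC)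
    (τBS : TopologicalSpace G) (hBS : T.IsBambooShoot τBS) :
    @IsTopologicalGroup G τBS _ := by
  letI := τBS
  have hb' : ∀ g : G, (𝓝 g).HasBasis
      (fun p : (ℕ → Set G) × ℕ => ∀ n, T.NsMem n (p.1 n))
      (fun p => g • bsU p.1 p.2) := hBS
  have hb1 : (𝓝 (1:G)).HasBasis
      (fun p : (ℕ → Set G) × ℕ => ∀ n, T.NsMem n (p.1 n))
      (fun p => bsU p.1 p.2) := by
    have := hb' 1
    simp only [one_smul] at this
    exact this
  refine IsTopologicalGroup.of_nhds_one ?_ ?_ ?_ ?_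
  · -- mul
    rw [(hb1.prod hb1).tendsto_iff hb1]
    rintro ⟨U, k⟩ hU
    obtain ⟨V, hV, hVU⟩ := hGC U hU k
    exact ⟨((V, k), (V, k)), ⟨hV, hV⟩,
      fun x hx => bsU_mul_bsU hVU ⟨x.1, hx.1, x.2, hx.2, rfl⟩⟩
  · -- inv
    rw [hb1.tendsto_iff hb1]
    rintro ⟨U, k⟩ hU
    refine ⟨(U, k), hU, fun a ha => ?_⟩
    rw [← bsU_inv U k]
    exact Set.inv_mem_inv.2 ha
  · -- left translation
    intro x₀
    refine Filter.ext fun A => ?_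
    rw [(hb' x₀).mem_iff, Filter.mem_map, hb1.mem_iff]
    constructor
    · rintro ⟨p, hp, hsub⟩
      exact ⟨p, hp, smul_subset_iff'.1 hsub⟩
    · rintro ⟨p, hp, hsub⟩
      exact ⟨p, hp, smul_subset_iff'.2 hsub⟩
  · -- conjugation
    intro x₀
    rw [hb1.tendsto_iff hb1]
    rintro ⟨U, k⟩ hU
    obtain ⟨m, hx₀⟩ := T.union x₀
    set l := max k m with hl
    have hx₀l : ∀ n, l ≤ n → x₀ ∈ T.H n :=
      fun n hn => T.le_of_le (le_trans (le_max_right k m) hn) hx₀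
    set V : ℕ → Set G := fun n =>
      if h : l ≤ n then (fun a => x₀⁻¹ * a * x₀) '' U n else ((T.H n : Set G)) with hVdef
    have hV : ∀ n, T.NsMem n (V n) := by
      intro n
      by_cases h : l ≤ n
      · simp only [hVdef, dif_pos h]
        have hxn := hx₀l n h
        obtain ⟨hUsub, hUopen, hU1, hUsym⟩ : T.NsMem n (U n) := hU n
        refine ⟨?_, ?_, ⟨1, hU1, by group⟩, ?_⟩
        · rintro - ⟨u, hu, rfl⟩
          exact mul_mem (mul_mem (inv_mem hxn) (hUsub hu)) hxn
        · letI := T.τ n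
          haveI := T.topGroup n
          have heq : (((↑) : T.H n → G) ⁻¹' ((fun a => x₀⁻¹ * a * x₀) '' U n)) =
              (fun y : T.H n => (⟨x₀, hxn⟩ : T.H n) * y * (⟨x₀, hxn⟩ : T.H n)⁻¹) ⁻¹'
                (((↑) : T.H n → G) ⁻¹' U n) := by
            ext y
            simp only [Set.mem_preimage, Set.mem_image]
            constructor
            · rintro ⟨u, hu, he⟩
              have : x₀ * (y : G) * x₀⁻¹ = u := by rw [← he]; group
              show ((⟨x₀, hxn⟩ : T.H n) * y * (⟨x₀, hxn⟩ : T.H n)⁻¹ : T.H n).1 ∈ U n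
              show x₀ * (y : G) * x₀⁻¹ ∈ U n
              rw [this]; exact hu
            · intro hy
              exact ⟨x₀ * (y : G) * x₀⁻¹, hy, by group⟩
          rw [heq]
          exact hUopen.preimage ((continuous_const.mul continuous_id).mul continuous_const)
        · ext a
          simp only [Set.mem_inv, Set.mem_image]
          constructor
          · rintro ⟨u, hu, he⟩
            refine ⟨u⁻¹, by rw [← hUsym]; exact Set.inv_mem_inv.2 hu, ?_⟩
            have : a = (x₀⁻¹ * u * x₀)⁻¹ := by rw [he, inv_inv]
            rw [this]; group
          · rintro ⟨u, hu, rfl⟩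
            refine ⟨u⁻¹, by rw [← hUsym]; exact Set.inv_mem_inv.2 hu, by group⟩
      · simp only [hVdef, dif_neg h]
        exact T.nsMem_coe n
    refine ⟨(V, l), hV, fun a ha => ?_⟩
    have hconj' : ∀ n, l ≤ n → (fun a => x₀ * a * x₀⁻¹) '' V n ⊆ U n := by
      intro n hn
      rintro - ⟨v, hv, rfl⟩
      simp only [hVdef, dif_pos hn] at hv
      obtain ⟨u, hu, rfl⟩ := hv
      show x₀ * (x₀⁻¹ * u * x₀) * x₀⁻¹ ∈ U n
      have : x₀ * (x₀⁻¹ * u * x₀) * x₀⁻¹ = u := by group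
      rw [this]; exact hu
    exact conj_bsU x₀ (nsMem_one_mem hU) (le_max_left k m) hconj' ⟨a, ha, rfl⟩
end Main

section Main2
variable {G : Type*} [Group G]

lemma bs_incl_cont (T : GroupTower G) (τBS : TopologicalSpace G) (hBS : T.IsBambooShoot τBS)
    (n : ℕ) : Continuous[T.τ n, τBS] ((↑) : T.H n → G) := by
  letI := T.τ n
  letI τ' := τBS
  rw [continuous_iff_continuousAt]
  intro g
  unfold ContinuousAt
  rw [(hBS (g : G)).tendsto_right_iff]
  rintro ⟨U, k⟩ hU
  set l := max k n with hl
  have hgl : (g : G) ∈ T.H l := T.le_of_le (le_max_right k n) g.2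
  have hUl : T.NsMem l (U l) := hU l
  have hopen : IsOpen[T.τ n] (((↑) : T.H n → G) ⁻¹' ((g : G) • U l)) :=
    T.preimage_open_of_le (le_max_right k n) (T.smul_preimage_open hgl hUl.2.1)
  have hgmem : g ∈ (((↑) : T.H n → G) ⁻¹' ((g : G) • U l)) :=
    ⟨1, hUl.2.2.1, mul_one _⟩
  have hmem : (((↑) : T.H n → G) ⁻¹' ((g : G) • U l)) ∈ @nhds _ (T.τ n) g :=
    hopen.mem_nhds hgmem
  filter_upwards [hmem] with y hy
  obtain ⟨u, hu, he⟩ := hy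
  exact ⟨u, bsPlus_subset_bsU (nsMem_one_mem hU) k
    (mem_bsPlus_of_le (nsMem_one_mem hU) (le_max_left k n) hu), he⟩

lemma bs_finest (T : GroupTower G) (τBS : TopologicalSpace G) (hBS : T.IsBambooShoot τBS)
    (t' : TopologicalSpace G) (ht' : T.IsCompatGroupTopology t')
    (A : Set G) (hA : IsOpen[t'] A) : IsOpen[τBS] A := by
  letI := t'
  haveI : IsTopologicalGroup G := ht'.1
  -- symmetric shrinking
  have hsymW : ∀ S : Set G, S ∈ 𝓝 (1:G) →
      ∃ W : Set G, IsOpen W ∧ (1:G) ∈ W ∧ W⁻¹ = W ∧ W * W ⊆ S := by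
    intro S hS
    obtain ⟨V, hVo, hV1, hVS⟩ := exists_open_nhds_one_mul_subset hS
    refine ⟨V ∩ V⁻¹, hVo.inter hVo.inv, ⟨hV1, by simpa using hV1⟩, ?_, ?_⟩
    · rw [Set.inter_inv, inv_inv, Set.inter_comm]
    · intro a ⟨b, hb, c, hc, he⟩
      exact hVS ⟨b, hb.1, c, hc.1, he⟩
  have key : ∀ B : Set G, (1:G) ∈ B → IsOpen B →
      ∃ V : ℕ → Set G, (∀ n, T.NsMem n (V n)) ∧ bsU V 0 ⊆ B := by
    intro B hB1 hBo
    have step' : ∀ W : {W : Set G // IsOpen W ∧ (1:G) ∈ W ∧ W⁻¹ = W},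
        {W' : Set G // (IsOpen W' ∧ (1:G) ∈ W' ∧ W'⁻¹ = W') ∧ W' * W' ⊆ W.1} := by
      intro W
      have h := hsymW W.1 (W.2.1.mem_nhds W.2.2.1)
      exact ⟨h.choose, ⟨h.choose_spec.1, h.choose_spec.2.1, h.choose_spec.2.2.1⟩,
        h.choose_spec.2.2.2⟩
    obtain ⟨W0, hW0o, hW01, hW0s, hW0B⟩ := hsymW B (hBo.mem_nhds hB1)
    let W : ℕ → {W : Set G // IsOpen W ∧ (1:G) ∈ W ∧ W⁻¹ = W} :=
      fun j => Nat.rec (motive := fun _ => {W : Set G // IsOpen W ∧ (1:G) ∈ W ∧ W⁻¹ = W})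
        ⟨W0, hW0o, hW01, hW0s⟩ (fun _ prev => ⟨(step' prev).1, (step' prev).2.1⟩) j
    have hWch : ∀ j, (W (j+1)).1 * (W (j+1)).1 ⊆ (W j).1 := fun j => (step' (W j)).2.2
    set V : ℕ → Set G := fun n => (W (n+1)).1 ∩ (T.H n : Set G) with hVdef
    have hWone : ∀ j, (1:G) ∈ (W j).1 := fun j => (W j).2.2.1
    refine ⟨V, ?_, ?_⟩
    · intro n
      refine ⟨inter_subset_right, ?_, ⟨hWone (n+1), (T.H n).one_mem⟩, ?_⟩
      · have heq : (((↑) : T.H n → G) ⁻¹' V n) = (((↑) : T.H n → G) ⁻¹' (W (n+1)).1) := by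
          ext y
          exact ⟨fun h => h.1, fun h => ⟨h, y.2⟩⟩
        rw [heq]
        exact @IsOpen.preimage _ _ (T.τ n) t' _ (ht'.2 n) _ (W (n+1)).2.1
      · rw [hVdef]
        have h2 : ((T.H n : Set G))⁻¹ = (T.H n : Set G) := by
          ext z; simp [Set.mem_inv, inv_mem_iff]
        rw [Set.inter_inv, (W (n+1)).2.2.2, h2]
    · -- bsU V 0 ⊆ B
      have hsub : ∀ j, bsProd V 0 j ⊆ (W 0).1 := by
        intro j
        have h1 : bsProd V 0 j ⊆ bsProd (fun n => (W (n+1)).1) 0 j :=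
          bsProd_mono_U (fun n => inter_subset_left) 0 j
        have h2 : bsProd (fun n => (W (n+1)).1) 0 j = bsProd (fun n => (W n).1) 1 j :=
          bsProd_shift (fun n => (W n).1) j
        rw [h2] at h1
        exact h1.trans (telescope hWone hWch j 0)
      have hplus : bsPlus V 0 ⊆ (W 0).1 := iUnion_subset hsub
      rintro - ⟨a, ha, b, hb, rfl⟩
      rw [Set.mem_inv] at ha
      have ha' : a ∈ (W 0).1 := by
        rw [← (W 0).2.2.2]
        exact Set.mem_inv.2 (hplus ha)
      exact hW0B ⟨a, ha', b, hplus hb, rfl⟩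
  -- conclude
  letI := τBS
  rw [isOpen_iff_mem_nhds]
  intro g hg
  have hB : IsOpen[t'] ((g * ·) ⁻¹' A) := by
    letI := t'
    exact hA.preimage (continuous_const.mul continuous_id)
  obtain ⟨V, hV, hVB⟩ := key ((g * ·) ⁻¹' A) (by simpa using hg) hB
  refine (hBS g).mem_iff.2 ⟨(V, 0), hV, ?_⟩
  rintro - ⟨z, hz, rfl⟩
  exact hVB hz
end Main2

/-- For a closed tower of Hausdorff groups satisfying (GC), the Bamboo-Shoot
topology is a Hausdorff group topology on the union, and it coincides with `τ_gr`, the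
finest group topology making all inclusions continuous (so `(G, τBS) = glim G_n`). -/
theorem statement_2 {G : Type*} [Group G] (T : GroupTower G)
    (hclosed : T.IsClosedTower)
    (hT2 : ∀ n, @T2Space (T.H n) (T.τ n))
    (hGC : T.GC)
    (τBS : TopologicalSpace G) (hBS : T.IsBambooShoot τBS) :
    @T2Space G τBS ∧ @IsTopologicalGroup G τBS _ ∧ T.IsGLim τBS := by
  have htg := bs_topGroup T hGC τBS hBS
  have hcont : ∀ n, Continuous[T.τ n, τBS] ((↑) : T.H n → G) := bs_incl_cont T τBS hBS
  have hT2' : @T2Space G τBS := by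
    letI := τBS
    haveI := htg
    apply IsTopologicalGroup.t2Space_of_one_sep
    intro x hx
    obtain ⟨U, k, hU, hxU⟩ := sep_main T hclosed hT2 hx
    refine ⟨bsU U k, ?_, hxU⟩
    have hmem := (hBS 1).mem_of_mem (i := (U, k)) hU
    rwa [one_smul] at hmem
  exact ⟨hT2', htg, ⟨htg, hcont⟩, fun t' ht' A hA => bs_finest T τBS hBS t' ht' A hA⟩
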